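/- arXiv:2603.15504 — 3 statements merged into one kernel-verified Lean document; each statement's English description precedes it below -/
import Mathlib

section
/- For any symmetric positive semidefinite matrix M of the form [[(1/τ)I, −Gᵀ], [−G, (1/σ)I]] with τσ‖G‖² ≤ 1, the seminorm ‖z‖_M := √(zᵀMz) satisfies (1 − √(τσ)‖G‖)·‖z‖_N² ≤ ‖z‖_M² ≤ (1 + √(τσ)‖G‖)·‖z‖_N², where N = diag((1/τ)I, (1/σ)I). -/
/-! Since `‖z‖_M² = ‖z‖_N² - 2⟪y, G x⟫`, both bounds say `2|⟪y, G x⟫| ≤ √(τσ) ‖G‖ ‖z‖_N²`.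
Cauchy–Schwarz and the operator norm give `|⟪y, G x⟫| ≤ ‖G‖ ‖x‖ ‖y‖`, and the weighted AM–GM
inequality `2ab ≤ √(τσ) (a²/τ + b²/σ)` finishes. -/

open Real

theorem two_mul_le_sqrt_mul_mul_add {τ σ : ℝ} (hτ : 0 < τ) (hσ : 0 < σ) (a b : ℝ) :
    2 * (a * b) ≤ √(τ * σ) * ((1 / τ) * a ^ 2 + (1 / σ) * b ^ 2) := by
  have hτ' : √τ ≠ 0 := (sqrt_pos.mpr hτ).ne'
  have hσ' : √σ ≠ 0 := (sqrt_pos.mpr hσ).ne'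
  -- AM–GM applied to the rescaled numbers `a / √τ` and `b / √σ`
  calc 2 * (a * b) = √(τ * σ) * (2 * (a / √τ) * (b / √σ)) := by
        rw [sqrt_mul hτ.le]; field_simp
    _ ≤ √(τ * σ) * ((a / √τ) ^ 2 + (b / √σ) ^ 2) :=
        mul_le_mul_of_nonneg_left (two_mul_le_add_sq _ _) (sqrt_nonneg _)
    _ = √(τ * σ) * ((1 / τ) * a ^ 2 + (1 / σ) * b ^ 2) := by
        rw [div_pow, div_pow, sq_sqrt hτ.le, sq_sqrt hσ.le]; ring

theorem two_mul_abs_inner_apply_le {E F : Type*} [NormedAddCommGroup E] [InnerProductSpace ℝ E]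
    [NormedAddCommGroup F] [InnerProductSpace ℝ F] (G : E →L[ℝ] F) {τ σ : ℝ} (hτ : 0 < τ)
    (hσ : 0 < σ) (x : E) (y : F) :
    2 * |(inner ℝ y (G x) : ℝ)| ≤
      √(τ * σ) * ‖G‖ * ((1 / τ) * ‖x‖ ^ 2 + (1 / σ) * ‖y‖ ^ 2) := by
  have hinner : |(inner ℝ y (G x) : ℝ)| ≤ ‖G‖ * (‖x‖ * ‖y‖) :=
    calc |(inner ℝ y (G x) : ℝ)| ≤ ‖y‖ * ‖G x‖ := abs_real_inner_le_norm y (G x)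
      _ ≤ ‖y‖ * (‖G‖ * ‖x‖) := mul_le_mul_of_nonneg_left (G.le_opNorm x) (norm_nonneg y)
      _ = ‖G‖ * (‖x‖ * ‖y‖) := by ring
  calc 2 * |(inner ℝ y (G x) : ℝ)| ≤ ‖G‖ * (2 * (‖x‖ * ‖y‖)) := by linarith
    _ ≤ ‖G‖ * (√(τ * σ) * ((1 / τ) * ‖x‖ ^ 2 + (1 / σ) * ‖y‖ ^ 2)) :=
        mul_le_mul_of_nonneg_left (two_mul_le_sqrt_mul_mul_add hτ hσ _ _) (norm_nonneg G)
    _ = √(τ * σ) * ‖G‖ * ((1 / τ) * ‖x‖ ^ 2 + (1 / σ) * ‖y‖ ^ 2) := by ring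

theorem stmt6_general {n m : ℕ}
    (G : EuclideanSpace ℝ (Fin n) →L[ℝ] EuclideanSpace ℝ (Fin m))
    (τ σ : ℝ) (hτ : 0 < τ) (hσ : 0 < σ) :
    ∀ (x : EuclideanSpace ℝ (Fin n)) (y : EuclideanSpace ℝ (Fin m)),
      (1 - Real.sqrt (τ * σ) * ‖G‖) * ((1 / τ) * ‖x‖ ^ 2 + (1 / σ) * ‖y‖ ^ 2)
          ≤ (1 / τ) * ‖x‖ ^ 2 + (1 / σ) * ‖y‖ ^ 2 - 2 * (inner ℝ y (G x) : ℝ)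
        ∧ (1 / τ) * ‖x‖ ^ 2 + (1 / σ) * ‖y‖ ^ 2 - 2 * (inner ℝ y (G x) : ℝ)
          ≤ (1 + Real.sqrt (τ * σ) * ‖G‖) * ((1 / τ) * ‖x‖ ^ 2 + (1 / σ) * ‖y‖ ^ 2) := by
  intro x y
  have hcross := two_mul_abs_inner_apply_le G hτ hσ x y
  have hle := le_abs_self (inner ℝ y (G x) : ℝ)
  have hge := neg_abs_le (inner ℝ y (G x) : ℝ)
  constructor <;> linarith

/-- For M = [[(1/τ)I, −Gᵀ], [−G, (1/σ)I]] with τ, σ > 0 and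
τσ‖G‖² ≤ 1, the seminorm ‖z‖_M² = (1/τ)‖x‖² + (1/σ)‖y‖² − 2⟨y, Gx⟩ satisfies
(1 − √(τσ)‖G‖)·‖z‖_N² ≤ ‖z‖_M² ≤ (1 + √(τσ)‖G‖)·‖z‖_N², where
‖z‖_N² = (1/τ)‖x‖² + (1/σ)‖y‖². -/
theorem stmt6 {n m : ℕ}
    (G : EuclideanSpace ℝ (Fin n) →L[ℝ] EuclideanSpace ℝ (Fin m))
    (τ σ : ℝ) (hτ : 0 < τ) (hσ : 0 < σ) (hstep : τ * σ * ‖G‖ ^ 2 ≤ 1) :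
    ∀ (x : EuclideanSpace ℝ (Fin n)) (y : EuclideanSpace ℝ (Fin m)),
      (1 - Real.sqrt (τ * σ) * ‖G‖) * ((1 / τ) * ‖x‖ ^ 2 + (1 / σ) * ‖y‖ ^ 2)
          ≤ (1 / τ) * ‖x‖ ^ 2 + (1 / σ) * ‖y‖ ^ 2 - 2 * (inner ℝ y (G x) : ℝ)
        ∧ (1 / τ) * ‖x‖ ^ 2 + (1 / σ) * ‖y‖ ^ 2 - 2 * (inner ℝ y (G x) : ℝ)
          ≤ (1 + Real.sqrt (τ * σ) * ‖G‖) * ((1 / τ) * ‖x‖ ^ 2 + (1 / σ) * ‖y‖ ^ 2) :=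
  stmt6_general G τ σ hτ hσ
end

section
/- The map t ↦ ‖z − z(t)‖_N, where z(t) = (proj_X(x + tτ b₁), proj_Y(y + tσ b₂)), is nondecreasing in t ≥ 0. -/
open RealInnerProductSpace

lemma vi_of_closest {E : Type*} [NormedAddCommGroup E] [InnerProductSpace ℝ E]
    {K : Set E} (hK : Convex ℝ K) {u p : E} (hp : p ∈ K)
    (h : ∀ q ∈ K, ‖u - p‖ ≤ ‖u - q‖) :
    ∀ q ∈ K, ⟪u - p, q - p⟫ ≤ 0 := by
  have : Nonempty K := ⟨⟨p, hp⟩⟩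
  have heq : ‖u - p‖ = ⨅ w : K, ‖u - w‖ := by
    refine le_antisymm (le_ciInf fun w => h w w.2) ?_
    exact ciInf_le ⟨0, fun r ⟨w, hw⟩ => hw ▸ norm_nonneg _⟩ (⟨p, hp⟩ : K)
  exact (norm_eq_iInf_iff_real_inner_le_zero hK hp).mp heq

lemma key_mono {E : Type*} [NormedAddCommGroup E] [InnerProductSpace ℝ E]
    {x d p q : E} {s t : ℝ} (hs : 0 ≤ s) (hst : s ≤ t)
    (hvp : ⟪(x + s • d) - p, q - p⟫ ≤ 0)
    (hvq : ⟪(x + t • d) - q, p - q⟫ ≤ 0) : ‖x - p‖ ≤ ‖x - q‖ := by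
  have e1 : x + s • d - p = s • d - (p - x) := by abel
  have e2 : q - p = (q - x) - (p - x) := by abel
  have e3 : x + t • d - q = t • d - (q - x) := by abel
  have e4 : p - q = (p - x) - (q - x) := by abel
  rw [e1, e2] at hvp
  rw [e3, e4] at hvq
  rw [norm_sub_rev x p, norm_sub_rev x q]
  obtain ⟨u1, hu1⟩ : ∃ u1, p - x = u1 := ⟨_, rfl⟩
  obtain ⟨u2, hu2⟩ : ∃ u2, q - x = u2 := ⟨_, rfl⟩
  rw [hu1, hu2] at hvp hvq ⊢
  simp only [inner_sub_left, inner_sub_right, real_inner_smul_left,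
    real_inner_self_eq_norm_sq] at hvp hvq
  have hcomm : ⟪u2, u1⟫ = ⟪u1, u2⟫ := real_inner_comm _ _
  rw [hcomm] at hvq
  have hcs : ⟪u1, u2⟫ ≤ ‖u1‖ * ‖u2‖ := real_inner_le_norm _ _
  have ha : (0:ℝ) ≤ ‖u1‖ := norm_nonneg _
  have hb : (0:ℝ) ≤ ‖u2‖ := norm_nonneg _
  by_contra hlt
  push_neg at hlt
  rcases eq_or_lt_of_le (hs.trans hst) with ht0 | ht0
  · have hs0 : s = 0 := le_antisymm (hst.trans ht0.symm.le) hs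
    rw [hs0] at hvp
    nlinarith
  · have hpos : 0 < t * ‖u1‖ - s * ‖u2‖ := by nlinarith
    nlinarith [mul_le_mul_of_nonneg_left hvp ht0.le,
      mul_le_mul_of_nonneg_left hvq hs,
      mul_le_mul_of_nonneg_left hcs (by linarith : (0:ℝ) ≤ t + s),
      mul_pos (sub_pos.mpr hlt) hpos]

/-- The map t ↦ ‖z − z(t)‖_N, where
z(t) = (proj_X(x + tτb₁), proj_Y(y + tσb₂)), is nondecreasing in t ≥ 0.
The projections px t, py t are characterized as closest points. -/
theorem stmt8 {n m : ℕ}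
    (X : Set (EuclideanSpace ℝ (Fin n))) (Y : Set (EuclideanSpace ℝ (Fin m)))
    (hXne : X.Nonempty) (hXclosed : IsClosed X) (hXconvex : Convex ℝ X)
    (hYne : Y.Nonempty) (hYclosed : IsClosed Y) (hYconvex : Convex ℝ Y)
    (x : EuclideanSpace ℝ (Fin n)) (y : EuclideanSpace ℝ (Fin m))
    (hx : x ∈ X) (hy : y ∈ Y)
    (b₁ : EuclideanSpace ℝ (Fin n)) (b₂ : EuclideanSpace ℝ (Fin m))
    (τ σ : ℝ) (hτ : 0 < τ) (hσ : 0 < σ)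
    (px : ℝ → EuclideanSpace ℝ (Fin n)) (py : ℝ → EuclideanSpace ℝ (Fin m))
    (hpxMem : ∀ t, px t ∈ X)
    (hpx : ∀ t, ∀ q ∈ X, ‖(x + (t * τ) • b₁) - px t‖ ≤ ‖(x + (t * τ) • b₁) - q‖)
    (hpyMem : ∀ t, py t ∈ Y)
    (hpy : ∀ t, ∀ q ∈ Y, ‖(y + (t * σ) • b₂) - py t‖ ≤ ‖(y + (t * σ) • b₂) - q‖) :
    ∀ s t : ℝ, 0 ≤ s → s ≤ t →
      Real.sqrt ((1 / τ) * ‖x - px s‖ ^ 2 + (1 / σ) * ‖y - py s‖ ^ 2)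
        ≤ Real.sqrt ((1 / τ) * ‖x - px t‖ ^ 2 + (1 / σ) * ‖y - py t‖ ^ 2) := by
  intro s t hs hst
  have hX1 : ‖x - px s‖ ≤ ‖x - px t‖ := by
    refine key_mono (x := x) (d := b₁) (s := s * τ) (t := t * τ)
      (mul_nonneg hs hτ.le) (mul_le_mul_of_nonneg_right hst hτ.le) ?_ ?_
    · exact vi_of_closest hXconvex (hpxMem s) (hpx s) (px t) (hpxMem t)
    · exact vi_of_closest hXconvex (hpxMem t) (hpx t) (px s) (hpxMem s)
  have hY1 : ‖y - py s‖ ≤ ‖y - py t‖ := by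
    refine key_mono (x := y) (d := b₂) (s := s * σ) (t := t * σ)
      (mul_nonneg hs hσ.le) (mul_le_mul_of_nonneg_right hst hσ.le) ?_ ?_
    · exact vi_of_closest hYconvex (hpyMem s) (hpy s) (py t) (hpyMem t)
    · exact vi_of_closest hYconvex (hpyMem t) (hpy t) (py s) (hpyMem s)
  apply Real.sqrt_le_sqrt
  gcongr <;> positivity
end

section
/- If ρ^N(r; z) = 0 for some r > 0 at z = (x,y) ∈ X × Y, where b = (Gᵀy − c, h − Gx) and ρ^N(r;z) := (1/r)·sup{⟨b, ẑ − z⟩ : ẑ ∈ X × Y, ‖ẑ − z‖_N ≤ r}, then z is a saddle point of L(x,y) = ⟨c,x⟩ − ⟨y, Gx − h⟩ over X × Y. -/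
/-!
Write `b = (Gᵀy - c, h - Gx)` and `g ẑ = ⟪b, ẑ - z⟫`. The `N`-ball of radius `r` around `z` is a
neighbourhood of `z`, and it is bounded because the weights are positive, so `g` is bounded above
on it and the vanishing supremum really says `g ≤ 0 = g z` near `z` on `X × Y`. As `g` is affine,
hence concave, this local maximum on the convex set `X × Y` is global, and `⟪Gᵀy, x̂⟫ = ⟪y, Gx̂⟫`
turns `g (x̂, ŷ) ≤ 0` into the saddle inequality.
-/

open Finset Set Filter Topology

theorem ContinuousLinearMap.map_sub_nonpos_of_forall_mem_nhds {E : Type*} [AddCommGroup E]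
    [TopologicalSpace E] [Module ℝ E] [IsTopologicalAddGroup E] [ContinuousSMul ℝ E]
    (ℓ : E →L[ℝ] ℝ) {s U : Set E} {z : E} (hs : Convex ℝ s) (hz : z ∈ s) (hU : U ∈ 𝓝 z)
    (hloc : ∀ w ∈ s ∩ U, ℓ (w - z) ≤ 0) : ∀ w ∈ s, ℓ (w - z) ≤ 0 := by
  have hmax : IsMaxOn ℓ s z := by
    refine IsMaxOn.of_isLocalMaxOn_of_concaveOn hz ?_ (ℓ.toLinearMap.concaveOn hs)
    filter_upwards [inter_mem_nhdsWithin s hU] with w hw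
    simpa using hloc w hw
  intro w hw
  simpa using hmax hw

section WeightedNorm

variable {ι κ : Type*} [Fintype ι] [Fintype κ]

noncomputable def weightedSqNorm (d : ι → ℝ) (v : EuclideanSpace ℝ ι) : ℝ := ∑ i, d i * v i ^ 2

/-- The norm `‖·‖_N` for `N = diag(d₁, d₂)`. -/
noncomputable def weightedNorm (d₁ : ι → ℝ) (d₂ : κ → ℝ)
    (w : EuclideanSpace ℝ ι × EuclideanSpace ℝ κ) : ℝ :=
  √(weightedSqNorm d₁ w.1 + weightedSqNorm d₂ w.2)

theorem weightedSqNorm_nonneg {d : ι → ℝ} (hd : ∀ i, 0 ≤ d i) (v : EuclideanSpace ℝ ι) :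
    0 ≤ weightedSqNorm d v :=
  sum_nonneg fun i _ => mul_nonneg (hd i) (sq_nonneg _)

theorem norm_le_of_weightedSqNorm_le {d : ι → ℝ} (hd : ∀ i, 0 < d i) {v : EuclideanSpace ℝ ι}
    {R : ℝ} (hv : weightedSqNorm d v ≤ R) : ‖v‖ ≤ √(∑ i, R / d i) := by
  have hcoord : ∀ i, v i ^ 2 ≤ R / d i := fun i => by
    rw [le_div_iff₀' (hd i)]
    exact (single_le_sum (f := fun i => d i * v i ^ 2)
      (fun j _ => mul_nonneg (hd j).le (sq_nonneg _)) (mem_univ i)).trans hv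
  rw [← Real.sqrt_sq (norm_nonneg v), EuclideanSpace.real_norm_sq_eq]
  exact Real.sqrt_le_sqrt (sum_le_sum fun i _ => hcoord i)

theorem norm_le_of_weightedNorm_le {d₁ : ι → ℝ} {d₂ : κ → ℝ} (hd₁ : ∀ i, 0 < d₁ i)
    (hd₂ : ∀ j, 0 < d₂ j) {w : EuclideanSpace ℝ ι × EuclideanSpace ℝ κ} {r : ℝ}
    (hw : weightedNorm d₁ d₂ w ≤ r) :
    ‖w‖ ≤ max √(∑ i, r ^ 2 / d₁ i) √(∑ j, r ^ 2 / d₂ j) := by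
  have h₁ := weightedSqNorm_nonneg (fun i => (hd₁ i).le) w.1
  have h₂ := weightedSqNorm_nonneg (fun j => (hd₂ j).le) w.2
  have hsum := (Real.sqrt_le_iff.1 hw).2
  exact norm_prod_le_iff.2
    ⟨(norm_le_of_weightedSqNorm_le hd₁ (by linarith)).trans (le_max_left _ _),
     (norm_le_of_weightedSqNorm_le hd₂ (by linarith)).trans (le_max_right _ _)⟩

theorem continuous_weightedNorm (d₁ : ι → ℝ) (d₂ : κ → ℝ) : Continuous (weightedNorm d₁ d₂) := by
  unfold weightedNorm weightedSqNorm
  fun_prop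

theorem setOf_weightedNorm_sub_le_mem_nhds (d₁ : ι → ℝ) (d₂ : κ → ℝ)
    (z : EuclideanSpace ℝ ι × EuclideanSpace ℝ κ) {r : ℝ} (hr : 0 < r) :
    {w | weightedNorm d₁ d₂ (w - z) ≤ r} ∈ 𝓝 z := by
  have hcont : Continuous fun w => weightedNorm d₁ d₂ (w - z) :=
    (continuous_weightedNorm d₁ d₂).comp (continuous_sub_right z)
  have hz : weightedNorm d₁ d₂ (z - z) < r := by simpa [weightedNorm, weightedSqNorm] using hr
  filter_upwards [hcont.continuousAt.eventually_lt continuousAt_const hz] with w hw using hw.le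

end WeightedNorm

theorem stmt11_general {n m : ℕ}
    (X : Set (EuclideanSpace ℝ (Fin n))) (Y : Set (EuclideanSpace ℝ (Fin m)))
    (hXconvex : Convex ℝ X)
    (hYconvex : Convex ℝ Y)
    (G : EuclideanSpace ℝ (Fin n) →L[ℝ] EuclideanSpace ℝ (Fin m))
    (c : EuclideanSpace ℝ (Fin n)) (h : EuclideanSpace ℝ (Fin m))
    (x : EuclideanSpace ℝ (Fin n)) (y : EuclideanSpace ℝ (Fin m))
    (hx : x ∈ X) (hy : y ∈ Y)
    (d₁ : Fin n → ℝ) (d₂ : Fin m → ℝ) (hd₁ : ∀ i, 0 < d₁ i) (hd₂ : ∀ j, 0 < d₂ j)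
    (r : ℝ) (hr : 0 < r)
    (hρ : (1 / r) * sSup ((fun zh :
          EuclideanSpace ℝ (Fin n) × EuclideanSpace ℝ (Fin m) =>
        (inner ℝ ((ContinuousLinearMap.adjoint G) y - c) (zh.1 - x) : ℝ)
          + (inner ℝ (h - G x) (zh.2 - y) : ℝ)) ''
        {zh | zh.1 ∈ X ∧ zh.2 ∈ Y ∧
          Real.sqrt (∑ i, d₁ i * ((zh.1 - x) i) ^ 2
            + ∑ j, d₂ j * ((zh.2 - y) j) ^ 2) ≤ r}) = 0) :
    ∀ x' ∈ X, ∀ y' ∈ Y,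
      (inner ℝ c x : ℝ) - (inner ℝ y' (G x - h) : ℝ)
        ≤ (inner ℝ c x' : ℝ) - (inner ℝ y (G x' - h) : ℝ) := by
  intro x' hx' y' hy'
  set z : EuclideanSpace ℝ (Fin n) × EuclideanSpace ℝ (Fin m) := (x, y)
  set ℓ := (innerSL ℝ (ContinuousLinearMap.adjoint G y - c)).coprod (innerSL ℝ (h - G x))
  set K := {w | w.1 ∈ X ∧ w.2 ∈ Y ∧ weightedNorm d₁ d₂ (w - z) ≤ r}
  -- `hρ` is this statement with `ℓ` and `weightedNorm` unfolded.
  have hsup : sSup ((fun w => ℓ (w - z)) '' K) = 0 :=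
    (mul_eq_zero.1 hρ).resolve_left (by positivity)
  have hK : K ⊆ Metric.closedBall z _ := fun w hw =>
    mem_closedBall_iff_norm.2 (norm_le_of_weightedNorm_le hd₁ hd₂ hw.2.2)
  have hbdd : BddAbove ((fun w => ℓ (w - z)) '' K) :=
    ((isCompact_closedBall z _).bddAbove_image
      (ℓ.continuous.comp (continuous_sub_right z)).continuousOn).mono (image_mono hK)
  have hfirst := ℓ.map_sub_nonpos_of_forall_mem_nhds (hXconvex.prod hYconvex) ⟨hx, hy⟩
    (setOf_weightedNorm_sub_le_mem_nhds d₁ d₂ z hr)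
    fun w hw => hsup ▸ le_csSup hbdd ⟨w, ⟨hw.1.1, hw.1.2, hw.2⟩, rfl⟩
  have hsaddle : inner ℝ (ContinuousLinearMap.adjoint G y - c) (x' - x)
      + inner ℝ (h - G x) (y' - y) ≤ 0 := hfirst (x', y') ⟨hx', hy'⟩
  simp only [inner_sub_left, inner_sub_right, ContinuousLinearMap.adjoint_inner_left] at hsaddle ⊢
  linarith [real_inner_comm h y', real_inner_comm h y, real_inner_comm (G x) y',
    real_inner_comm (G x) y]

/-- If the normalized duality gap ρ^N(r; z) = 0 for some r > 0 at
z = (x,y) ∈ X × Y, where b = (Gᵀy − c, h − Gx) and N is positive definite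
diagonal, then z is a saddle point of L(x,y) = ⟨c,x⟩ − ⟨y, Gx − h⟩ over X × Y:
L(x, ŷ) ≤ L(x̂, y) for all x̂ ∈ X, ŷ ∈ Y. -/
theorem stmt11 {n m : ℕ}
    (X : Set (EuclideanSpace ℝ (Fin n))) (Y : Set (EuclideanSpace ℝ (Fin m)))
    (hXne : X.Nonempty) (hXclosed : IsClosed X) (hXconvex : Convex ℝ X)
    (hYne : Y.Nonempty) (hYclosed : IsClosed Y) (hYconvex : Convex ℝ Y)
    (G : EuclideanSpace ℝ (Fin n) →L[ℝ] EuclideanSpace ℝ (Fin m))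
    (c : EuclideanSpace ℝ (Fin n)) (h : EuclideanSpace ℝ (Fin m))
    (x : EuclideanSpace ℝ (Fin n)) (y : EuclideanSpace ℝ (Fin m))
    (hx : x ∈ X) (hy : y ∈ Y)
    (d₁ : Fin n → ℝ) (d₂ : Fin m → ℝ) (hd₁ : ∀ i, 0 < d₁ i) (hd₂ : ∀ j, 0 < d₂ j)
    (r : ℝ) (hr : 0 < r)
    (hρ : (1 / r) * sSup ((fun zh :
          EuclideanSpace ℝ (Fin n) × EuclideanSpace ℝ (Fin m) =>
        (inner ℝ ((ContinuousLinearMap.adjoint G) y - c) (zh.1 - x) : ℝ)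
          + (inner ℝ (h - G x) (zh.2 - y) : ℝ)) ''
        {zh | zh.1 ∈ X ∧ zh.2 ∈ Y ∧
          Real.sqrt (∑ i, d₁ i * ((zh.1 - x) i) ^ 2
            + ∑ j, d₂ j * ((zh.2 - y) j) ^ 2) ≤ r}) = 0) :
    ∀ x' ∈ X, ∀ y' ∈ Y,
      (inner ℝ c x : ℝ) - (inner ℝ y' (G x - h) : ℝ)
        ≤ (inner ℝ c x' : ℝ) - (inner ℝ y (G x' - h) : ℝ) :=
  stmt11_general X Y hXconvex hYconvex G c h x y hx hy d₁ d₂ hd₁ hd₂ r hr hρ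
end
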